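/- Let R be a commutative Noetherian ring, 𝔞 an ideal of R, and M, N finitely generated R-modules such that M = Γ_𝔞(M) and cd(𝔞, N) = 1. Then H^i_𝔞(M, N) is a finitely generated R-module for all i ≥ 0. -/

import Mathlib

/-!
Formalization of a statement about generalized local cohomology.

`genLocalCohomology I i M N` is the generalized local cohomology module
`H^i_I(M, N) = colim_n Ext^i_R(M/IⁿM, N)`, the direct limit over `n` of the Ext
modules along the maps induced by the natural surjections `M/Iⁿ⁺¹M → M/IⁿM`.
`Mathlib`'s `localCohomology I i` is the ordinary local cohomology functor
(the direct limit of `Ext^i(R/Iⁿ, -)`).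
-/

open CategoryTheory CategoryTheory.Limits Opposite

noncomputable section

universe u

variable {R : Type u} [CommRing R]

/-- The directed system `n ↦ M ⧸ IⁿM` (indexed by `ℕᵒᵖ`), with the maps being the
natural surjections `M/Iⁿ⁺¹M → M/IⁿM`. -/
def modIdealPowersDiagram (I : Ideal R) (M : Type u) [AddCommGroup M] [Module R M] :
    ℕᵒᵖ ⥤ ModuleCat.{u} R where
  obj t := ModuleCat.of R (M ⧸ (I ^ (unop t) • ⊤ : Submodule R M))
  map {t t'} w := ModuleCat.ofHom (Submodule.mapQ _ _ LinearMap.id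
    (by
      rw [Submodule.comap_id]
      exact Submodule.smul_mono (Ideal.pow_le_pow_right w.unop.down.down) le_rfl))
  map_id t := by
    ext : 1
    exact Submodule.mapQ_id _
  map_comp {a b c} f g := by
    ext : 1
    dsimp only [ModuleCat.hom_comp, ModuleCat.hom_ofHom]
    rw [← Submodule.mapQ_comp]
    rfl

/-- The generalized local cohomology module
`H^i_I(M, N) = colim_n Ext^i_R(M/IⁿM, N)`. -/
def genLocalCohomology (I : Ideal R) (i : ℕ) (M : Type u) [AddCommGroup M] [Module R M]
    (N : ModuleCat.{u} R) : ModuleCat.{u} R :=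
  colimit (((modIdealPowersDiagram I M).op ⋙ Ext R (ModuleCat.{u} R) i).flip.obj N)

/-- `Ext^i_R(M, N)`, as an object of `ModuleCat R`. -/
def extModule (i : ℕ) (M N : ModuleCat.{u} R) : ModuleCat.{u} R :=
  ((Ext R (ModuleCat.{u} R) i).obj (op M)).obj N

/-- The `I`-torsion submodule `Γ_I(X) = {x ∈ X | Iⁿx = 0 for some n}` of `X`. -/
def torsionGamma (I : Ideal R) (X : Type u) [AddCommGroup X] [Module R X] : Submodule R X :=
  ⨆ n : ℕ, Submodule.torsionBySet R X ((I ^ n : Ideal R) : Set R)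

/-- An `R`-module `X` is `I`-cofinite if `Supp(X) ⊆ V(I)` and `Ext^i_R(R/I, X)` is a
finitely generated `R`-module for all `i`. -/
def IsCofinite (I : Ideal R) (X : ModuleCat.{u} R) : Prop :=
  Module.support R X ⊆ PrimeSpectrum.zeroLocus (I : Set R) ∧
    ∀ i : ℕ, Module.Finite R (extModule i (ModuleCat.of R (R ⧸ I)) X)

/-!
A finitely generated `I`-torsion module `M` is killed by some power `Iᵏ`, so the system `M/IⁿM`
is constant from `n = k` on and `H^i_I(M, N)` is a quotient of `Ext^i_R(M/IᵏM, N)`. Over a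
Noetherian ring this `Ext` module is finitely generated: `M/IᵏM` has a resolution by finite free
modules `Rⁿ`, and `Hom_R(Rⁿ, N) ≅ Nⁿ` is a Noetherian module, so its subquotients are finite.
-/

theorem exists_pow_smul_top_eq_bot_of_torsionGamma_eq_top {I : Ideal R} {M : Type u}
    [AddCommGroup M] [Module R M] [Module.Finite R M] (hM : torsionGamma I M = ⊤) :
    ∃ k : ℕ, (I ^ k • ⊤ : Submodule R M) = ⊥ := by
  have htop : IsCompactElement (⊤ : Submodule R M) :=
    (Submodule.fg_iff_compact ⊤).mp Module.Finite.fg_top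
  obtain ⟨s, hs⟩ := CompleteLattice.IsCompactElement.exists_finset_of_le_iSup _ htop _ hM.ge
  refine ⟨s.sup id, ?_⟩
  have hk : Module.IsTorsionBySet R M ((I ^ s.sup id : Ideal R) : Set R) := by
    refine (Module.isTorsionBySet_iff_torsionBySet_eq_top _).mpr (top_unique (hs.trans ?_))
    exact iSup₂_le fun n hn ↦
      Submodule.torsionBySet_le_torsionBySet_pow _ _ (Finset.le_sup (f := id) hn) I
  rw [← Submodule.le_annihilator_iff, Submodule.annihilator_top]
  exact (Module.isTorsionBySet_iff_subset_annihilator R M).mp hk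

theorem isIso_modIdealPowersDiagram_map (I : Ideal R) (M : Type u) [AddCommGroup M] [Module R M]
    {a b : ℕ} (w : op b ⟶ op a) (ha : (I ^ a • ⊤ : Submodule R M) = ⊥) :
    IsIso ((modIdealPowersDiagram I M).map w) := by
  rw [ConcreteCategory.isIso_iff_bijective]
  constructor
  · rintro ⟨x⟩ ⟨y⟩ hxy
    have hxy' : x - y ∈ (⊥ : Submodule R M) := ha ▸ (Submodule.Quotient.eq _).mp hxy
    rw [Submodule.mem_bot, sub_eq_zero] at hxy'
    rw [hxy']
  · rintro ⟨y⟩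
    exact ⟨Submodule.Quotient.mk y, rfl⟩

theorem ModuleCat.colimit_ι_surjective_of_exists_surjective_map {J : Type*} [Category J]
    (G : J ⥤ ModuleCat.{u} R) [HasColimit G] [PreservesColimit G (forget (ModuleCat.{u} R))]
    (k : J) (h : ∀ j, ∃ (j' : J) (_ : j ⟶ j') (g : k ⟶ j'), Function.Surjective (G.map g)) :
    Function.Surjective (colimit.ι G k) := by
  intro x
  obtain ⟨j, y, rfl⟩ := Concrete.colimit_exists_rep G x
  obtain ⟨j', f, g, hg⟩ := h j
  obtain ⟨z, hz⟩ := hg (G.map f y)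
  refine ⟨z, ?_⟩
  rw [← colimit.w_apply G g, hz, colimit.w_apply]

theorem colimit_ι_surjective_of_pow_smul_top_eq_bot {I : Ideal R} {M : Type u} [AddCommGroup M]
    [Module R M] {k : ℕ} (hk : (I ^ k • ⊤ : Submodule R M) = ⊥) (i : ℕ) (N : ModuleCat.{u} R) :
    Function.Surjective (colimit.ι
      (((modIdealPowersDiagram I M).op ⋙ Ext R (ModuleCat.{u} R) i).flip.obj N) (op (op k))) := by
  have := preservesSmallestFilteredColimits_of_preservesFilteredColimits (forget (ModuleCat.{u} R))
  refine ModuleCat.colimit_ι_surjective_of_exists_surjective_map _ _ fun j ↦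
    ⟨op (op (max j.unop.unop k)), (homOfLE (le_max_left _ _)).op.op,
      (homOfLE (le_max_right _ _)).op.op, ?_⟩
  let w : op (max j.unop.unop k) ⟶ op k := (homOfLE (le_max_right _ _)).op
  have := isIso_modIdealPowersDiagram_map I M w hk
  exact (ConcreteCategory.bijective_of_isIso
    (((Ext R (ModuleCat.{u} R) i).map ((modIdealPowersDiagram I M).map w).op).app N)).2

theorem CategoryTheory.ShortComplex.moduleCat_finite_homology_of_isNoetherian
    (S : ShortComplex (ModuleCat.{u} R)) [IsNoetherian R S.X₂] : Module.Finite R S.homology :=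
  have : Module.Finite R S.moduleCatLeftHomologyData.H :=
    inferInstanceAs (Module.Finite R (LinearMap.ker S.g.hom ⧸ LinearMap.range S.moduleCatToCycles))
  Module.Finite.equiv S.moduleCatHomologyIso.toLinearEquiv.symm

theorem CategoryTheory.ProjectiveResolution.finite_extModule [IsNoetherianRing R]
    {X : ModuleCat.{u} R} (P : ProjectiveResolution X) [∀ i, Module.Finite R (P.complex.X i)]
    (N : ModuleCat.{u} R) [Module.Finite R N] (i : ℕ) : Module.Finite R (extModule i X N) := by
  have : IsNoetherian R ((P.complex.linearYonedaObj R N).sc i).X₂ :=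
    isNoetherian_of_linearEquiv (ModuleCat.homLinearEquiv (S := R)).symm
  have : Module.Finite R ((P.complex.linearYonedaObj R N).homology i) :=
    ShortComplex.moduleCat_finite_homology_of_isNoetherian _
  exact Module.Finite.equiv (P.isoExt i N).toLinearEquiv.symm

namespace Module

variable (R) (X : Type u) [AddCommGroup X] [Module R X] [Module.Finite R X]

def freeCoverRank : ℕ :=
  (Module.Finite.exists_fin' R X).choose

def freeCover : (Fin (freeCoverRank R X) → R) →ₗ[R] X :=
  (Module.Finite.exists_fin' R X).choose_spec.choose

theorem freeCover_surjective : Function.Surjective (freeCover R X) :=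
  (Module.Finite.exists_fin' R X).choose_spec.choose_spec

variable [IsNoetherianRing R]

/-- The `i`-th syzygy of `X`, as a submodule of `Rⁿ`, the `i`-th term of the resolution. -/
def syzygy : ℕ → Σ n : ℕ, Submodule R (Fin n → R)
  | 0 => ⟨freeCoverRank R X, LinearMap.ker (freeCover R X)⟩
  | i + 1 => ⟨freeCoverRank R (syzygy i).2, LinearMap.ker (freeCover R (syzygy i).2)⟩

def syzygyDifferential (i : ℕ) :
    (Fin (syzygy R X (i + 1)).1 → R) →ₗ[R] (Fin (syzygy R X i).1 → R) :=
  (syzygy R X i).2.subtype ∘ₗ freeCover R (syzygy R X i).2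

theorem ker_syzygyDifferential (i : ℕ) :
    LinearMap.ker (syzygyDifferential R X i) = (syzygy R X (i + 1)).2 := by
  change LinearMap.ker ((syzygy R X i).2.subtype ∘ₗ freeCover R (syzygy R X i).2) = _
  rw [LinearMap.ker_comp, Submodule.ker_subtype, Submodule.comap_bot]
  rfl

theorem range_syzygyDifferential (i : ℕ) :
    LinearMap.range (syzygyDifferential R X i) = (syzygy R X i).2 := by
  change LinearMap.range ((syzygy R X i).2.subtype ∘ₗ freeCover R (syzygy R X i).2) = _
  rw [LinearMap.range_comp, LinearMap.range_eq_top.mpr (freeCover_surjective R _),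
    Submodule.map_subtype_top]

def finiteFreeComplex : ChainComplex (ModuleCat.{u} R) ℕ :=
  ChainComplex.of (fun i ↦ ModuleCat.of R (Fin (syzygy R X i).1 → R))
    (fun i ↦ ModuleCat.ofHom (syzygyDifferential R X i))
    (fun i ↦ ModuleCat.hom_ext <| LinearMap.range_le_ker_iff.mp <|
      (range_syzygyDifferential R X (i + 1)).trans_le (ker_syzygyDifferential R X i).ge)

theorem finiteFreeComplex_d (i : ℕ) :
    (finiteFreeComplex R X).d (i + 1) i = ModuleCat.ofHom (syzygyDifferential R X i) :=
  ChainComplex.of_d (fun j ↦ ModuleCat.of R (Fin (syzygy R X j).1 → R))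
    (fun j ↦ ModuleCat.ofHom (syzygyDifferential R X j)) i

theorem finiteFreeComplex_exactAt_succ (i : ℕ) : (finiteFreeComplex R X).ExactAt (i + 1) := by
  rw [HomologicalComplex.exactAt_iff' _ (i + 2) (i + 1) i (by simp) (by simp),
    ShortComplex.moduleCat_exact_iff_range_eq_ker]
  dsimp [HomologicalComplex.sc', HomologicalComplex.shortComplexFunctor']
  rw [finiteFreeComplex_d, finiteFreeComplex_d]
  exact (range_syzygyDifferential R X (i + 1)).trans (ker_syzygyDifferential R X i).symm

instance (i : ℕ) : CategoryTheory.Projective ((finiteFreeComplex R X).X i) :=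
  ModuleCat.projective_of_free (Pi.basisFun R (Fin (syzygy R X i).1))

def finiteFreeComplexπ :
    finiteFreeComplex R X ⟶ (ChainComplex.single₀ (ModuleCat.{u} R)).obj (ModuleCat.of R X) :=
  (ChainComplex.toSingle₀Equiv _ _).symm ⟨ModuleCat.ofHom (freeCover R X), by
    rw [finiteFreeComplex_d]
    exact ModuleCat.hom_ext <| LinearMap.range_le_ker_iff.mp (range_syzygyDifferential R X 0).le⟩

theorem finiteFreeComplexπ_f_zero :
    (finiteFreeComplexπ R X).f 0 = ModuleCat.ofHom (freeCover R X) :=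
  ChainComplex.toSingle₀Equiv_symm_apply_f_zero _ _

def finiteFreeResolution : ProjectiveResolution (ModuleCat.of R X) where
  complex := finiteFreeComplex R X
  π := finiteFreeComplexπ R X
  quasiIso := ⟨fun n ↦ by
    cases n with
    | zero =>
      rw [ChainComplex.quasiIsoAt₀_iff, ShortComplex.quasiIso_iff_of_zeros']
      · refine ⟨?_, ?_⟩
        · rw [ShortComplex.moduleCat_exact_iff_range_eq_ker]
          dsimp [HomologicalComplex.shortComplexFunctor']
          rw [finiteFreeComplexπ_f_zero, finiteFreeComplex_d]
          exact range_syzygyDifferential R X 0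
        · dsimp [HomologicalComplex.shortComplexFunctor']
          rw [finiteFreeComplexπ_f_zero]
          exact (ModuleCat.epi_iff_surjective _).mpr (freeCover_surjective R X)
      all_goals rfl
    | succ n =>
      exact (quasiIsoAt_iff_exactAt' _ (n + 1)
        (ChainComplex.exactAt_succ_single_obj _ _)).2 (finiteFreeComplex_exactAt_succ R X n)⟩

instance (i : ℕ) : Module.Finite R ((finiteFreeResolution R X).complex.X i) :=
  inferInstanceAs (Module.Finite R (Fin (syzygy R X i).1 → R))

end Module

theorem finite_extModule [IsNoetherianRing R] (X N : Type u) [AddCommGroup X] [Module R X]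
    [Module.Finite R X] [AddCommGroup N] [Module R N] [Module.Finite R N] (i : ℕ) :
    Module.Finite R (extModule i (ModuleCat.of R X) (ModuleCat.of R N)) :=
  have : Module.Finite R (ModuleCat.of R N) := ‹Module.Finite R N›
  (Module.finiteFreeResolution R X).finite_extModule _ i

theorem genLocalCohomology_finite_of_torsion_of_cd_one_general [IsNoetherianRing R] (I : Ideal R)
    (M : Type u) [AddCommGroup M] [Module R M] [Module.Finite R M]
    (N : Type u) [AddCommGroup N] [Module R N] [Module.Finite R N]
    (hM : torsionGamma I M = ⊤) :
    ∀ i : ℕ, Module.Finite R (genLocalCohomology I i M (ModuleCat.of R N)) := by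
  intro i
  obtain ⟨k, hk⟩ := exists_pow_smul_top_eq_bot_of_torsionGamma_eq_top hM
  have hfin : Module.Finite R
      (extModule i ((modIdealPowersDiagram I M).obj (op k)) (ModuleCat.of R N)) :=
    finite_extModule _ _ i
  exact Module.Finite.of_surjective (hM := hfin) _
    (colimit_ι_surjective_of_pow_smul_top_eq_bot hk i _)

/-- If `M`, `N` are finitely generated with `M = Γ_I(M)` and `cd(I, N) = 1`
(i.e. `1` is the largest integer `i` with `H^i_I(N) ≠ 0`), then `H^i_I(M, N)` is finitely
generated for all `i ≥ 0`. -/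
theorem genLocalCohomology_finite_of_torsion_of_cd_one [IsNoetherianRing R] (I : Ideal R)
    (M : Type u) [AddCommGroup M] [Module R M] [Module.Finite R M]
    (N : Type u) [AddCommGroup N] [Module R N] [Module.Finite R N]
    (hM : torsionGamma I M = ⊤)
    (hcd₁ : ¬ Subsingleton ((localCohomology I 1).obj (ModuleCat.of R N)))
    (hcd₂ : ∀ j, 1 < j → Subsingleton ((localCohomology I j).obj (ModuleCat.of R N))) :
    ∀ i : ℕ, Module.Finite R (genLocalCohomology I i M (ModuleCat.of R N)) :=
  genLocalCohomology_finite_of_torsion_of_cd_one_general I M N hM
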